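/- arXiv:2407.12384 — 4 statements merged into one kernel-verified Lean document; each statement's English description precedes it below -/
import Mathlib

section
/- There exists a universal constant C > 0 such that for all real q ≥ 2 and all integers m ≥ 1, (Γ(m/2)/Γ((q+m)/2))^{1/q} ≤ C m^{−1/2}. -/
/-!
Since `log ∘ Γ` is convex on `(0, ∞)`, its secant slope over `[x, x + t]` with `t ≥ 1` is at least
its slope over `[x, x + 1]`, which is `log x` by `Γ(x + 1) = x Γ(x)`. Hence `Γ(x + t) ≥ x ^ t Γ(x)`.
With `x = m / 2` and `t = q / 2` this bounds the ratio by `(m / 2) ^ (-q / 2)`, and taking the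
`q`-th root gives the claim with `C = √2`.
-/

open Real Set

namespace Real

theorem rpow_mul_Gamma_le_Gamma_add {x t : ℝ} (hx : 0 < x) (ht : 1 ≤ t) :
    x ^ t * Gamma x ≤ Gamma (x + t) := by
  have hΓx := Gamma_pos_of_pos hx
  have hΓxt := Gamma_pos_of_pos (show 0 < x + t by linarith)
  have hslope := convexOn_log_Gamma.secant_mono (a := x) (x := x + 1) (y := x + t)
    hx (by simp only [mem_Ioi]; linarith) (by simp only [mem_Ioi]; linarith)
    (by linarith) (by linarith) (by linarith)
  have hlog : log x * t ≤ log (Gamma (x + t)) - log (Gamma x) := by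
    simp only [Function.comp, Gamma_add_one hx.ne', add_sub_cancel_left, div_one,
      log_mul hx.ne' hΓx.ne'] at hslope
    rwa [add_sub_cancel_right, le_div_iff₀ (by linarith)] at hslope
  rwa [← exp_le_exp, exp_sub, exp_log hΓx, exp_log hΓxt, le_div_iff₀ hΓx,
    ← rpow_def_of_pos hx] at hlog

theorem Gamma_div_Gamma_add_le_rpow_neg {x t : ℝ} (hx : 0 < x) (ht : 1 ≤ t) :
    Gamma x / Gamma (x + t) ≤ x ^ (-t) := by
  rw [div_le_iff₀ (Gamma_pos_of_pos (by linarith)), rpow_neg hx.le, inv_mul_eq_div,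
    le_div_iff₀ (by positivity)]
  exact (mul_comm _ _).trans_le (rpow_mul_Gamma_le_Gamma_add hx ht)

end Real

/-- There is a universal `C > 0` such that for all real `q ≥ 2`
and all integers `m ≥ 1`, `(Γ(m/2)/Γ((q+m)/2))^{1/q} ≤ C m^{-1/2}`. -/
theorem stmt_8 : ∃ C > (0:ℝ), ∀ q : ℝ, 2 ≤ q → ∀ m : ℕ, 1 ≤ m →
    (Real.Gamma ((m : ℝ) / 2) / Real.Gamma ((q + (m : ℝ)) / 2)) ^ (1 / q) ≤
      C * (m : ℝ) ^ (-(1 / 2) : ℝ) := by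
  refine ⟨√2, by positivity, fun q hq m hm => ?_⟩
  have hm0 : (0 : ℝ) < m := by exact_mod_cast hm
  have hx : (0 : ℝ) < m / 2 := by positivity
  have hratio := Gamma_div_Gamma_add_le_rpow_neg hx (t := q / 2) (by linarith)
  rw [show (m : ℝ) / 2 + q / 2 = (q + m) / 2 by ring] at hratio
  calc (Gamma ((m : ℝ) / 2) / Gamma ((q + m) / 2)) ^ (1 / q)
      ≤ (((m : ℝ) / 2) ^ (-(q / 2))) ^ (1 / q) :=
        rpow_le_rpow (div_nonneg (Gamma_pos_of_pos hx).le (Gamma_pos_of_pos (by positivity)).le)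
          hratio (by positivity)
    _ = ((m : ℝ) / 2) ^ (-(1 / 2) : ℝ) := by
        rw [← rpow_mul hx.le]; congr 1; field_simp
    _ = √2 * (m : ℝ) ^ (-(1 / 2) : ℝ) := by
        rw [div_rpow hm0.le zero_le_two, rpow_neg zero_le_two, div_eq_mul_inv, inv_inv, mul_comm,
          sqrt_eq_rpow]
end

section
/- Let G be a vertex-transitive graph on n vertices whose adjacency matrix has maximal eigenvalue multiplicity M_n. Then every L²-normalized eigenvector u of the adjacency matrix satisfies, for all q ∈ [2, ∞], ‖u‖_{ℓ^q} ≤ M_n^{1/2} n^{1/q − 1/2}. -/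
/-!
Let `P` be the orthogonal projection of `ℓ²(V)` onto the eigenspace `W` containing `u`. Since
`u ∈ W`, `u x = ⟪P eₓ, u⟫`, so `|u x| ≤ ‖P eₓ‖`. Graph automorphisms permute coordinates and
preserve `W`, hence commute with `P`; by vertex-transitivity `‖P eₓ‖²` does not depend on `x`.
Summing over `x` gives `trace P = dim W ≤ M`, so `‖P eₓ‖² = dim W / n` and `‖u‖_∞ ≤ √(M / n)`.
The `ℓ^q` bound then follows from `‖u‖_q ≤ n^{1/q} ‖u‖_∞`.
-/

open Module Submodule
open scoped RealInnerProductSpace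

namespace EuclideanSpace

variable {ι : Type*} [Fintype ι] [DecidableEq ι] (W : Submodule ℝ (EuclideanSpace ℝ ι))

theorem abs_apply_le_norm_mul_norm_starProjection_single {v : EuclideanSpace ℝ ι} (hv : v ∈ W)
    (x : ι) : |v x| ≤ ‖v‖ * ‖W.starProjection (single x 1)‖ := by
  have hvx : v x = ⟪W.starProjection (single x 1), v⟫ := by
    rw [inner_starProjection_left_eq_right, starProjection_eq_self_iff.mpr hv, inner_single_left]
    simp
  rw [hvx, mul_comm]
  exact abs_real_inner_le_norm _ _

theorem sum_norm_starProjection_single_sq :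
    ∑ x, ‖W.starProjection (single x 1)‖ ^ 2 = finrank ℝ W := by
  have hproj : LinearMap.IsProj W (W.starProjection : EuclideanSpace ℝ ι →ₗ[ℝ] _) :=
    ⟨W.starProjection_apply_mem, fun _ hv => starProjection_eq_self_iff.mpr hv⟩
  rw [← hproj.trace, LinearMap.trace_eq_sum_inner _ (EuclideanSpace.basisFun ι ℝ)]
  refine Finset.sum_congr rfl fun x _ => ?_
  rw [← real_inner_self_eq_norm_sq, inner_starProjection_left_eq_right,
    starProjection_eq_self_iff.mpr (W.starProjection_apply_mem _)]
  simp

theorem norm_starProjection_single_apply_equiv (σ : ι ≃ ι)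
    (hσ : ∀ v ∈ W, LinearIsometryEquiv.piLpCongrLeft 2 ℝ ℝ σ v ∈ W) (x : ι) :
    ‖W.starProjection (single (σ x) 1)‖ = ‖W.starProjection (single x 1)‖ := by
  set T := LinearIsometryEquiv.piLpCongrLeft 2 ℝ ℝ σ
  have hmap : W.map (T.toLinearEquiv : EuclideanSpace ℝ ι →ₗ[ℝ] _) = W :=
    eq_of_le_of_finrank_eq (Submodule.map_le_iff_le_comap.mpr hσ)
      (LinearEquiv.finrank_map_eq _ _)
  have hcomm := starProjection_map_apply T W (single (σ x) 1)
  simp only [hmap] at hcomm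
  rw [hcomm, LinearIsometryEquiv.norm_map, LinearIsometryEquiv.piLpCongrLeft_symm,
    piLpCongrLeft_single, Equiv.symm_apply_apply]

theorem norm_starProjection_single_sq_eq_finrank_div_card
    (htrans : ∀ x y, ∃ σ : ι ≃ ι,
      (∀ v ∈ W, LinearIsometryEquiv.piLpCongrLeft 2 ℝ ℝ σ v ∈ W) ∧ σ x = y) (x : ι) :
    ‖W.starProjection (single x 1)‖ ^ 2 = finrank ℝ W / Fintype.card ι := by
  have hconst : ∀ y, ‖W.starProjection (single y 1)‖ = ‖W.starProjection (single x 1)‖ := by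
    intro y
    obtain ⟨σ, hσW, rfl⟩ := htrans x y
    exact norm_starProjection_single_apply_equiv W σ hσW x
  have hcard : (Fintype.card ι : ℝ) ≠ 0 := by
    have : Nonempty ι := ⟨x⟩
    positivity
  rw [← sum_norm_starProjection_single_sq W, Finset.sum_congr rfl fun y _ => by rw [hconst y],
    Finset.sum_const, Finset.card_univ, nsmul_eq_mul]
  field_simp

theorem abs_apply_le_norm_mul_sqrt_finrank_div_card
    (htrans : ∀ x y, ∃ σ : ι ≃ ι,
      (∀ v ∈ W, LinearIsometryEquiv.piLpCongrLeft 2 ℝ ℝ σ v ∈ W) ∧ σ x = y)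
    {v : EuclideanSpace ℝ ι} (hv : v ∈ W) (x : ι) :
    |v x| ≤ ‖v‖ * √(finrank ℝ W / Fintype.card ι) := by
  rw [← norm_starProjection_single_sq_eq_finrank_div_card W htrans x,
    Real.sqrt_sq (norm_nonneg _)]
  exact abs_apply_le_norm_mul_norm_starProjection_single W hv x

end EuclideanSpace

theorem Matrix.comp_equiv_mem_eigenspace_mulVecLin {n R : Type*} [Fintype n] [CommRing R]
    {A : Matrix n n R} {σ : n ≃ n} (hA : A.submatrix σ σ = A) {c : R} {v : n → R}
    (hv : v ∈ Module.End.eigenspace A.mulVecLin c) :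
    v ∘ σ ∈ Module.End.eigenspace A.mulVecLin c := by
  rw [Module.End.mem_eigenspace_iff, Matrix.mulVecLin_apply] at hv ⊢
  rw [← hA, Matrix.submatrix_mulVec_equiv, Function.comp_assoc, σ.self_comp_symm,
    Function.comp_id, hv]
  rfl

theorem SimpleGraph.Iso.comp_mem_eigenspace_adjMatrix {V R : Type*} [Fintype V] [CommRing R]
    {G : SimpleGraph V} [DecidableRel G.Adj] (σ : G ≃g G) {c : R} {v : V → R}
    (hv : v ∈ Module.End.eigenspace (G.adjMatrix R).mulVecLin c) :
    v ∘ σ ∈ Module.End.eigenspace (G.adjMatrix R).mulVecLin c :=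
  Matrix.comp_equiv_mem_eigenspace_mulVecLin (σ := σ.toEquiv)
    (σ.toEmbedding.submatrix_adjMatrix R) hv

theorem Real.rpow_sum_abs_rpow_le_card_rpow_mul {ι : Type*} [Fintype ι] {u : ι → ℝ} {q s : ℝ}
    (hq : 0 < q) (hs : 0 ≤ s) (hu : ∀ x, |u x| ≤ s) :
    (∑ x, |u x| ^ q) ^ (1 / q) ≤ (Fintype.card ι : ℝ) ^ (1 / q) * s := by
  have hsum : ∑ x, |u x| ^ q ≤ Fintype.card ι * s ^ q := by
    simpa using Finset.sum_le_card_nsmul Finset.univ _ _ fun x _ =>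
      Real.rpow_le_rpow (abs_nonneg _) (hu x) hq.le
  calc (∑ x, |u x| ^ q) ^ (1 / q) ≤ (Fintype.card ι * s ^ q) ^ (1 / q) := by gcongr
    _ = (Fintype.card ι : ℝ) ^ (1 / q) * s := by
      rw [Real.mul_rpow (by positivity) (by positivity), one_div,
        Real.rpow_rpow_inv hs hq.ne']

/-- For a vertex-transitive graph `G` on `n` vertices whose
adjacency matrix has all eigenspaces of dimension at most `M`, every
`ℓ²`-normalized eigenvector `u` satisfies `‖u‖_{ℓ^q} ≤ √M · n^{1/q - 1/2}`
for all `q ∈ [2,∞]` (the case `q = ∞` reading `‖u‖_∞ ≤ √M · n^{-1/2}`). -/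
theorem stmt_11 (V : Type*) [Fintype V] [DecidableEq V]
    (G : SimpleGraph V) [DecidableRel G.Adj]
    (htrans : ∀ x y : V, ∃ e : G ≃g G, e x = y)
    (M : ℕ)
    (hM : ∀ c : ℝ,
      Module.finrank ℝ ↥(Module.End.eigenspace (Matrix.mulVecLin (G.adjMatrix ℝ)) c) ≤ M)
    (u : V → ℝ) (c : ℝ) (heig : (G.adjMatrix ℝ).mulVec u = c • u)
    (hnorm : ∑ x, (u x) ^ 2 = 1) :
    (∀ q : ℝ, 2 ≤ q →
      (∑ x, |u x| ^ q) ^ (1 / q) ≤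
        Real.sqrt M * (Fintype.card V : ℝ) ^ (1 / q - 1 / 2)) ∧
    (∀ x, |u x| ≤ Real.sqrt M * (Fintype.card V : ℝ) ^ (-(1 / 2) : ℝ)) := by
  set W := (Module.End.eigenspace (G.adjMatrix ℝ).mulVecLin c).comap
    (WithLp.linearEquiv 2 ℝ (V → ℝ) : EuclideanSpace ℝ V →ₗ[ℝ] V → ℝ) with hWdef
  have hW : ∀ x y, ∃ σ : V ≃ V,
      (∀ v ∈ W, LinearIsometryEquiv.piLpCongrLeft 2 ℝ ℝ σ v ∈ W) ∧ σ x = y := fun x y =>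
    let ⟨σ, hσ⟩ := htrans x y
    ⟨σ.toEquiv, fun _ hv => σ.symm.comp_mem_eigenspace_adjMatrix hv, hσ⟩
  have hWM : finrank ℝ W ≤ M := by
    rw [hWdef, Submodule.comap_equiv_eq_map_symm, LinearEquiv.finrank_map_eq]
    exact hM c
  have huW : WithLp.toLp 2 u ∈ W := Module.End.mem_eigenspace_iff.mpr heig
  have hu1 : ‖WithLp.toLp 2 u‖ = 1 := by
    simp [EuclideanSpace.norm_eq, hnorm]
  have hcard : 0 < (Fintype.card V : ℝ) := by
    obtain ⟨x, -, -⟩ := Finset.exists_ne_zero_of_sum_ne_zero (hnorm ▸ one_ne_zero)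
    exact_mod_cast Fintype.card_pos_iff.mpr ⟨x⟩
  have hsup : ∀ x, |u x| ≤ √M * (Fintype.card V : ℝ) ^ (-(1 / 2) : ℝ) := fun x =>
    calc |u x| ≤ ‖WithLp.toLp 2 u‖ * √(finrank ℝ W / Fintype.card V) :=
          EuclideanSpace.abs_apply_le_norm_mul_sqrt_finrank_div_card W hW huW x
      _ ≤ √(M / Fintype.card V) := by rw [hu1, one_mul]; gcongr
      _ = √M * (Fintype.card V : ℝ) ^ (-(1 / 2) : ℝ) := by
        rw [Real.sqrt_div' _ hcard.le, div_eq_mul_inv, Real.rpow_neg hcard.le,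
          ← Real.sqrt_eq_rpow]
  refine ⟨fun q hq => ?_, hsup⟩
  calc (∑ x, |u x| ^ q) ^ (1 / q)
      ≤ (Fintype.card V : ℝ) ^ (1 / q) * (√M * (Fintype.card V : ℝ) ^ (-(1 / 2) : ℝ)) :=
        Real.rpow_sum_abs_rpow_le_card_rpow_mul (by linarith) (by positivity) hsup
    _ = √M * (Fintype.card V : ℝ) ^ (1 / q - 1 / 2) := by
      rw [mul_left_comm, ← Real.rpow_add hcard, sub_eq_add_neg]
end

section
/- Let G × H be a product graph where G is vertex-transitive with ℓ vertices and H arbitrary with m vertices, and let A be the adjacency matrix of G × H. Then for any set I of eigenvalues, the diagonal of the spectral projector satisfies Π_I((g,h),(g,h)) = Π_I((g',h),(g',h)) for all g, g' ∈ V(G), h ∈ V(H), and consequently Π_I(x,x) ≤ N(I)/ℓ for every vertex x. -/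
/-!
Let `B` be the orthogonal matrix whose rows are the eigenvectors `ψ k`, so that
`A = Bᵀ D B` with `D = diagonal lam` and `Π_I = Bᵀ 1_I(D) B`. A matrix `M` commuting with `A`
gives `B M Bᵀ` commuting with `D`, hence with every diagonal matrix that is constant on the
eigenvalue classes of `D`; so `M` commutes with `Π_I`. An automorphism `e` of `G` acts as
`e × id` by an automorphism of the product graph, whose permutation matrix commutes with `A`,
so the diagonal of `Π_I` is invariant under it, and vertex-transitivity makes it constant
along `G`. Summing over the `G`-fibre through `x` then bounds `ℓ Π_I(x,x)` by `tr Π_I = N(I)`.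
-/

open Matrix Finset

namespace Matrix

variable {n R : Type*} [Fintype n] [DecidableEq n]

lemma commute_permMatrix_iff [NonAssocSemiring R] {σ : Equiv.Perm n} {M : Matrix n n R} :
    Commute (σ.permMatrix R) M ↔ M.submatrix σ σ = M := by
  rw [Commute, SemiconjBy, Equiv.Perm.permMatrix, PEquiv.toMatrix_toPEquiv_mul,
    PEquiv.mul_toMatrix_toPEquiv]
  constructor <;> intro h <;> ext i j
  · simpa using congrFun₂ h i (σ j)
  · simpa using congrFun₂ h i (σ.symm j)

lemma mul_transpose_eq_transpose_mul_diagonal [CommSemiring R] {A B : Matrix n n R}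
    {d : n → R} (h : ∀ k, A *ᵥ B k = d k • B k) : A * Bᵀ = Bᵀ * diagonal d := by
  ext x k
  rw [mul_diagonal, mul_comm (Bᵀ x k)]
  simpa [mul_apply, mulVec, dotProduct] using congrFun (h k) x

lemma transpose_mul_diagonal_mul_apply [CommSemiring R] (B : Matrix n n R) (w : n → R)
    (x y : n) : (Bᵀ * diagonal w * B) x y = ∑ k, w k * (B k x * B k y) := by
  rw [mul_apply]
  simp only [mul_diagonal, transpose_apply]
  exact sum_congr rfl fun k _ => by ring

variable [CommRing R] [NoZeroDivisors R]

/-- Commuting with `diagonal d` forces `N k l = 0` whenever `d k ≠ d l`. -/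
lemma _root_.Commute.diagonal_of_diagonal {N : Matrix n n R} {d w : n → R}
    (hw : ∀ k l, d k = d l → w k = w l) (h : Commute N (diagonal d)) :
    Commute N (diagonal w) := by
  ext k l
  have hkl : N k l * d l = d k * N k l := by simpa using congrFun₂ h k l
  simp only [mul_diagonal, diagonal_mul]
  by_cases hd : d k = d l
  · rw [hw k l hd, mul_comm]
  · have hN : N k l = 0 := by
      have : N k l * (d l - d k) = 0 := by linear_combination hkl
      exact (mul_eq_zero.1 this).resolve_right (sub_ne_zero.2 (Ne.symm hd))
    simp [hN]

lemma _root_.Commute.transpose_mul_diagonal_mul {A B M : Matrix n n R} {d w : n → R}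
    (hB : B * Bᵀ = 1) (hAB : A * Bᵀ = Bᵀ * diagonal d) (hw : ∀ k l, d k = d l → w k = w l)
    (hM : Commute M A) : Commute M (Bᵀ * diagonal w * B) := by
  have hBt : Bᵀ * B = 1 := mul_eq_one_comm.1 hB
  have hBA : B * A = diagonal d * B :=
    calc B * A = B * (A * Bᵀ) * B := by simp only [mul_assoc, hBt, mul_one]
      _ = diagonal d * B := by rw [hAB, ← mul_assoc, hB, one_mul]
  have hN : Commute (B * M * Bᵀ) (diagonal d) :=
    calc B * M * Bᵀ * diagonal d = B * M * A * Bᵀ := by rw [mul_assoc _ A, hAB, mul_assoc]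
      _ = B * A * M * Bᵀ := by rw [mul_assoc B, hM.eq, ← mul_assoc]
      _ = diagonal d * (B * M * Bᵀ) := by rw [hBA]; simp only [mul_assoc]
  calc M * (Bᵀ * diagonal w * B) = Bᵀ * (B * M * Bᵀ * diagonal w) * B := by
        simp only [← mul_assoc, hBt, one_mul]
    _ = Bᵀ * (diagonal w * (B * M * Bᵀ)) * B := by rw [(hN.diagonal_of_diagonal hw).eq]
    _ = Bᵀ * diagonal w * B * M := by simp only [mul_assoc, hBt, mul_one]

lemma submatrix_transpose_mul_diagonal_mul {A B : Matrix n n R} {d w : n → R}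
    {σ : Equiv.Perm n} (hB : B * Bᵀ = 1) (hAB : A * Bᵀ = Bᵀ * diagonal d)
    (hw : ∀ k l, d k = d l → w k = w l) (hσ : A.submatrix σ σ = A) :
    (Bᵀ * diagonal w * B).submatrix σ σ = Bᵀ * diagonal w * B :=
  commute_permMatrix_iff.1 <| (commute_permMatrix_iff.2 hσ).transpose_mul_diagonal_mul hB hAB hw

end Matrix

namespace SimpleGraph

variable {α β : Type*}

def IsGraphProduct (G : SimpleGraph α) (H : SimpleGraph β) (P : SimpleGraph (α × β)) : Prop :=
  ∃ R : Prop → Prop → Prop → Prop → Prop, ∀ g g' : α, ∀ h h' : β,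
    P.Adj (g, h) (g', h') ↔ R (G.Adj g g') (g = g') (H.Adj h h') (h = h')

def IsGraphProduct.autFst {G : SimpleGraph α} {H : SimpleGraph β} {P : SimpleGraph (α × β)}
    (hP : G.IsGraphProduct H P) (e : G ≃g G) : P ≃g P where
  toEquiv := e.toEquiv.prodCongr (Equiv.refl β)
  map_rel_iff' := by
    obtain ⟨R, hR⟩ := hP
    rintro ⟨a, b⟩ ⟨c, d⟩
    simp [hR, e.map_adj_iff, e.injective.eq_iff]

end SimpleGraph

lemma card_nsmul_le_sum_of_apply_fst_eq {α β M : Type*} [Fintype α] [Fintype β]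
    [AddCommMonoid M] [PartialOrder M] [IsOrderedAddMonoid M] {F : α × β → M} (hF : 0 ≤ F)
    (hconst : ∀ g g' h, F (g, h) = F (g', h)) (x : α × β) :
    Fintype.card α • F x ≤ ∑ y, F y :=
  calc Fintype.card α • F x = ∑ g, F (g, x.2) := by simp [hconst _ x.1]
    _ ≤ ∑ g, ∑ h, F (g, h) :=
      sum_le_sum fun g _ => single_le_sum (f := fun h => F (g, h)) (fun h _ => hF _) (mem_univ _)
    _ = ∑ y, F y := (Fintype.sum_prod_type F).symm

/-- For a graph product `P` of a vertex-transitive graph `G`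
(with `ℓ` vertices) and an arbitrary graph `H` (adjacency in `P` depends only
on the adjacency/equality relations of the two coordinates), the diagonal of
the spectral projector of the adjacency matrix of `P` is constant along the
`G`-coordinate, and `Π_I(x,x) ≤ N(I)/ℓ` for every vertex `x`. -/
theorem stmt_12 (α β : Type*) [Fintype α] [Fintype β] [DecidableEq α] [DecidableEq β]
    (G : SimpleGraph α) (H : SimpleGraph β) (P : SimpleGraph (α × β))
    [DecidableRel P.Adj]
    (hprod : ∃ R : Prop → Prop → Prop → Prop → Prop,
      ∀ g g' : α, ∀ h h' : β,
        P.Adj (g, h) (g', h') ↔ R (G.Adj g g') (g = g') (H.Adj h h') (h = h'))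
    (htrans : ∀ x y : α, ∃ e : G ≃g G, e x = y)
    (ψ : α × β → α × β → ℝ) (lam : α × β → ℝ)
    (horth : ∀ k l, ∑ j, ψ k j * ψ l j = if k = l then (1:ℝ) else 0)
    (heig : ∀ k, (P.adjMatrix ℝ).mulVec (ψ k) = lam k • ψ k)
    (I : Set ℝ) (S : Finset (α × β)) (hS : ∀ k, k ∈ S ↔ lam k ∈ I) :
    (∀ g g' : α, ∀ h : β,
      ∑ k ∈ S, (ψ k (g, h)) ^ 2 = ∑ k ∈ S, (ψ k (g', h)) ^ 2) ∧
    (∀ x : α × β,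
      ∑ k ∈ S, (ψ k x) ^ 2 ≤ (S.card : ℝ) / (Fintype.card α : ℝ)) := by
  let B : Matrix (α × β) (α × β) ℝ := Matrix.of ψ
  let w : α × β → ℝ := fun k => if k ∈ S then 1 else 0
  have hB : B * Bᵀ = 1 := by
    ext k l
    simpa [mul_apply, one_apply, B] using horth k l
  have hw : ∀ k l, lam k = lam l → w k = w l := fun k l h =>
    if_congr (by rw [hS, hS, h]) rfl rfl
  have hproj : ∀ x, ∑ k ∈ S, ψ k x ^ 2 = (Bᵀ * diagonal w * B) x x := fun x => by
    simp [transpose_mul_diagonal_mul_apply, w, B, sq]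
  have hconst : ∀ g g' : α, ∀ h : β, ∑ k ∈ S, ψ k (g, h) ^ 2 = ∑ k ∈ S, ψ k (g', h) ^ 2 := by
    intro g g' h
    obtain ⟨e, rfl⟩ := htrans g g'
    have hσ := (SimpleGraph.IsGraphProduct.autFst hprod e).toEmbedding.submatrix_adjMatrix ℝ
    rw [hproj, hproj]
    exact (congrFun₂ (submatrix_transpose_mul_diagonal_mul hB
      (mul_transpose_eq_transpose_mul_diagonal heig) hw hσ) (g, h) (g, h)).symm
  refine ⟨hconst, fun x => ?_⟩
  have hcard : (0 : ℝ) < Fintype.card α := by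
    exact_mod_cast Fintype.card_pos_iff.2 ⟨x.1⟩
  have hsum : ∑ y, ∑ k ∈ S, ψ k y ^ 2 = S.card := by
    rw [sum_comm]
    simp [sq, horth]
  rw [le_div_iff₀ hcard, mul_comm, ← nsmul_eq_mul, ← hsum]
  exact card_nsmul_le_sum_of_apply_fst_eq (fun y => sum_nonneg fun k _ => sq_nonneg (ψ k y))
    hconst x
end

section
/- Let G be a vertex-transitive graph with vertex set V, |V| = n, let E_k be an eigenspace of its adjacency matrix with orthonormal basis ψ_1,…,ψ_{m_k}, and let f : V → ℝ have mean zero. Define B = (β_{ij}) with β_{ij} = Σ_{x∈V} f(x)ψ_i(x)ψ_j(x). Then Tr(B) = 0 and Tr(B²) = Σ_{i,j} β_{ij}² ≤ (m_k/n) ‖f‖_{ℓ²}². -/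
/-!
Write `B = (⟨ψ_i, f ψ_j⟩)_{ij}`. Its trace is `∑_x f(x) ∑_i ψ_i(x)² = (m/n) ∑_x f(x) = 0`.
For each `j`, Bessel's inequality for the orthonormal family `ψ` bounds the `j`-th column:
`∑_i ⟨ψ_i, f ψ_j⟩² ≤ ‖f ψ_j‖²`, and summing over `j` gives
`∑_x f(x)² ∑_j ψ_j(x)² = (m/n) ‖f‖²`.
-/

open Finset

section Orthonormal

variable {ι V : Type*} [Fintype ι] [Fintype V]

theorem sum_sq_dotProduct_le_sum_sq_of_orthonormal [DecidableEq ι] {ψ : ι → V → ℝ}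
    (horth : ∀ i j, ∑ x, ψ i x * ψ j x = if i = j then (1 : ℝ) else 0) (g : V → ℝ) :
    ∑ i, (∑ x, ψ i x * g x) ^ 2 ≤ ∑ x, g x ^ 2 := by
  let e : ι → EuclideanSpace ℝ V := fun i => WithLp.toLp 2 (ψ i)
  have he : Orthonormal ℝ e := by
    rw [orthonormal_iff_ite]
    intro i j
    simpa [e, PiLp.inner_apply, mul_comm] using horth i j
  simpa [e, PiLp.inner_apply, EuclideanSpace.norm_sq_eq, mul_comm] using
    he.sum_inner_products_le (WithLp.toLp 2 g) (s := univ)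

theorem sum_sum_mul_sq_comm (ψ : ι → V → ℝ) (w : V → ℝ) :
    ∑ i, ∑ x, w x * ψ i x ^ 2 = ∑ x, w x * ∑ i, ψ i x ^ 2 := by
  rw [sum_comm]
  simp only [mul_sum]

end Orthonormal

theorem stmt_13_general (V : Type*) [Fintype V]
    (n m : ℕ)
    (ψ : Fin m → V → ℝ)
    (horth : ∀ i j, ∑ x, ψ i x * ψ j x = if i = j then (1:ℝ) else 0)
    (hconst : ∀ x, ∑ i, (ψ i x) ^ 2 = (m : ℝ) / (n : ℝ))
    (f : V → ℝ) (hmean : ∑ x, f x = 0) :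
    (∑ i, ∑ x, f x * ψ i x * ψ i x) = 0 ∧
    (∑ i, ∑ j, (∑ x, f x * ψ i x * ψ j x) ^ 2 ≤
      ((m : ℝ) / (n : ℝ)) * ∑ x, (f x) ^ 2) := by
  constructor
  · calc ∑ i, ∑ x, f x * ψ i x * ψ i x = ∑ i, ∑ x, f x * ψ i x ^ 2 := by
          simp only [mul_assoc, sq]
      _ = (∑ x, f x) * ((m : ℝ) / n) := by simp only [sum_sum_mul_sq_comm, hconst, sum_mul]
      _ = 0 := by rw [hmean, zero_mul]
  · calc ∑ i, ∑ j, (∑ x, f x * ψ i x * ψ j x) ^ 2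
        = ∑ j, ∑ i, (∑ x, ψ i x * (f x * ψ j x)) ^ 2 := by
          rw [sum_comm]
          simp only [mul_assoc, mul_left_comm (f _)]
      _ ≤ ∑ j, ∑ x, (f x * ψ j x) ^ 2 :=
          sum_le_sum fun j _ => sum_sq_dotProduct_le_sum_sq_of_orthonormal horth _
      _ = ∑ x, f x ^ 2 * ((m : ℝ) / n) := by
          simp only [mul_pow, sum_sum_mul_sq_comm, hconst]
      _ = ((m : ℝ) / n) * ∑ x, f x ^ 2 := by rw [← sum_mul, mul_comm]

/-- Let `G` be vertex-transitive on `n` vertices, `ψ_1,…,ψ_m` an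
orthonormal basis of an eigenspace of the adjacency matrix (so that
`∑_i ψ_i(x)² = m/n` for every `x`, by transitivity), and `f` of mean zero.
With `β_{ij} = ∑_x f(x)ψ_i(x)ψ_j(x)` we have `Tr B = 0` and
`Tr B² = ∑_{ij} β_{ij}² ≤ (m/n)‖f‖_{ℓ²}²`. -/
theorem stmt_13 (V : Type*) [Fintype V] [DecidableEq V]
    (G : SimpleGraph V) [DecidableRel G.Adj]
    (htrans : ∀ x y : V, ∃ e : G ≃g G, e x = y)
    (n m : ℕ) (hn : Fintype.card V = n)
    (ψ : Fin m → V → ℝ) (lam0 : ℝ)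
    (horth : ∀ i j, ∑ x, ψ i x * ψ j x = if i = j then (1:ℝ) else 0)
    (heig : ∀ i, (G.adjMatrix ℝ).mulVec (ψ i) = lam0 • ψ i)
    (hconst : ∀ x, ∑ i, (ψ i x) ^ 2 = (m : ℝ) / (n : ℝ))
    (f : V → ℝ) (hmean : ∑ x, f x = 0) :
    (∑ i, ∑ x, f x * ψ i x * ψ i x) = 0 ∧
    (∑ i, ∑ j, (∑ x, f x * ψ i x * ψ j x) ^ 2 ≤
      ((m : ℝ) / (n : ℝ)) * ∑ x, (f x) ^ 2) :=
  stmt_13_general V n m ψ horth hconst f hmean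
end
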